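/- In the sequence δ(k) = U^d A^k G U^d A^{d-k} (with 0 < k < d), the maximum number of stacking pairs formable within the sequence alone is d-1, while the concatenation-disjoint pairing of δ(k) with its reverse-complement counterpart δ̄(k) = U^{d-k} A^d G U^k A^d can form 3d-2 stacking pairs. -/

import Mathlib

inductive Base : Type
  | A | U | G | C
deriving DecidableEq, Repr

open Base

def isWC : Base → Base → Prop := fun x y =>
  (x = A ∧ y = U) ∨ (x = U ∧ y = A) ∨ (x = C ∧ y = G) ∨ (x = G ∧ y = C)

instance (x y : Base) : Decidable (isWC x y) := by unfold isWC; infer_instance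

def at' (S : List Base) (i : ℕ) : Base := S.getD i Base.A

def ValidSS (S : List Base) (P : Finset (ℕ × ℕ)) : Prop :=
  (∀ p ∈ P, p.1 + 2 ≤ p.2 ∧ p.2 < S.length ∧ isWC (at' S p.1) (at' S p.2)) ∧
  (∀ p ∈ P, ∀ q ∈ P, p ≠ q → p.1 ≠ q.1 ∧ p.1 ≠ q.2 ∧ p.2 ≠ q.1 ∧ p.2 ≠ q.2)

def numSP (P : Finset (ℕ × ℕ)) : ℕ :=
  (P.filter (fun p => (p.1 + 1, p.2 - 1) ∈ P ∧ p.1 + 4 ≤ p.2)).card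

def rep (b : Base) (k : ℕ) : List Base := List.replicate k b

/-- `δ(k) = U^d A^k G U^d A^{d-k}`. -/
def dseq (d k : ℕ) : List Base := rep U d ++ rep A k ++ [G] ++ rep U d ++ rep A (d - k)

/-- `δ̄(k) = U^{d-k} A^d G U^k A^d`. -/
def dbar (d k : ℕ) : List Base := rep U (d - k) ++ rep A d ++ [G] ++ rep U k ++ rep A d

/-!
Since `δ(k)` contains no `C`, each of its base pairs is an A–U pair, and distinct pairs use
distinct `A`s, so a structure on `δ(k)` has at most `d` pairs. The shift `(i, j) ↦ (i + 1, j - 1)`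
maps the stacking pairs injectively to pairs other than the one with the leftmost opening
position, so there are at most `d - 1` stacking pairs. A single helix pairing positions
`k, …, k + d - 1` with `3d, …, 2d + 1` attains this. In `δ(k) G δ̄(k)` two nested helices,
separated by the unpaired `G` of `δ(k)`, pair every base of `δ(k)` except that `G` with a
complementary base of `δ̄(k)` and give `(d + k - 1) + (2d - k - 1)` stacking pairs.
-/

open Finset

theorem List.card_filter_getD_eq_count {α : Type*} [DecidableEq α] (l : List α) (x a : α) :
    #{i ∈ Finset.range l.length | l.getD i x = a} = l.count a := by
  induction l with
  | nil => simp
  | cons b l ih =>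
    rw [card_filter] at ih ⊢
    rw [length_cons, Finset.sum_range_succ', count_cons]
    simp only [getD_cons_succ, getD_cons_zero, ih, beq_iff_eq]

lemma at'_mem {S : List Base} {i : ℕ} (h : i < S.length) : at' S i ∈ S := by
  rw [at', List.getD_eq_getElem _ _ h]
  exact List.getElem_mem h

lemma at'_append_of_lt {l m : List Base} {i : ℕ} (h : i < l.length) :
    at' (l ++ m) i = at' l i :=
  List.getD_append _ _ _ _ h

lemma at'_append_of_le {l m : List Base} {i : ℕ} (h : l.length ≤ i) :
    at' (l ++ m) i = at' m (i - l.length) :=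
  List.getD_append_right _ _ _ _ h

lemma at'_rep_append_of_lt {b : Base} {l : List Base} {n i : ℕ} (h : i < n) :
    at' (rep b n ++ l) i = b := by
  rw [at'_append_of_lt (by simpa [rep] using h), at', rep,
    List.getD_eq_getElem _ _ (by simpa using h), List.getElem_replicate]

lemma at'_rep_append_of_le {b : Base} {l : List Base} {n i : ℕ} (h : n ≤ i) :
    at' (rep b n ++ l) i = at' l (i - n) := by
  rw [at'_append_of_le (by simpa [rep] using h), rep, List.length_replicate]

lemma at'_cons_of_pos {b : Base} {l : List Base} {i : ℕ} (h : 0 < i) :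
    at' (b :: l) i = at' l (i - 1) := by
  obtain ⟨i, rfl⟩ := Nat.exists_eq_add_one_of_ne_zero h.ne'
  rfl

/-- Holds for every `i`, since `A` is also the default value of `at'`. -/
lemma at'_rep_A (n i : ℕ) : at' (rep A n) i = A := by
  by_cases h : i < n
  · simpa using at'_rep_append_of_lt (l := []) h
  · exact List.getD_eq_default _ _ (by simp [rep]; omega)

section Sequences

variable {d k i : ℕ}

lemma dseq_eq (d k : ℕ) : dseq d k = rep U d ++ (rep A k ++ G :: (rep U d ++ rep A (d - k))) := by
  simp [dseq]

lemma dbar_eq (d k : ℕ) : dbar d k = rep U (d - k) ++ (rep A d ++ G :: (rep U k ++ rep A d)) := by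
  simp [dbar]

lemma length_dseq (hk : k ≤ d) : (dseq d k).length = 3 * d + 1 := by
  simp [dseq, rep]; omega

lemma length_dbar (hk : k ≤ d) : (dbar d k).length = 3 * d + 1 := by
  simp [dbar, rep]; omega

lemma C_not_mem_dseq (d k : ℕ) : C ∉ dseq d k := by
  simp [dseq, rep]

lemma count_A_dseq (hk : k ≤ d) : (dseq d k).count A = d := by
  simp [dseq, rep, List.count_replicate]; omega

lemma at'_dseq_of_lt (h : i < d) : at' (dseq d k) i = U := by
  rw [dseq_eq, at'_rep_append_of_lt h]

lemma at'_dseq_of_lt_add (h₁ : d ≤ i) (h₂ : i < d + k) : at' (dseq d k) i = A := by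
  rw [dseq_eq, at'_rep_append_of_le h₁, at'_rep_append_of_lt (by omega)]

lemma at'_dseq_of_gt_add (h₁ : d + k < i) (h₂ : i < 2 * d + k + 1) : at' (dseq d k) i = U := by
  rw [dseq_eq, at'_rep_append_of_le (by omega), at'_rep_append_of_le (by omega),
    at'_cons_of_pos (by omega), at'_rep_append_of_lt (by omega)]

lemma at'_dseq_of_le (h : 2 * d + k + 1 ≤ i) : at' (dseq d k) i = A := by
  rw [dseq_eq, at'_rep_append_of_le (by omega), at'_rep_append_of_le (by omega),
    at'_cons_of_pos (by omega), at'_rep_append_of_le (by omega), at'_rep_A]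

lemma at'_dbar_of_lt (h : i < d - k) : at' (dbar d k) i = U := by
  rw [dbar_eq, at'_rep_append_of_lt h]

lemma at'_dbar_of_lt_sub (h₁ : d - k ≤ i) (h₂ : i < 2 * d - k) : at' (dbar d k) i = A := by
  rw [dbar_eq, at'_rep_append_of_le h₁, at'_rep_append_of_lt (by omega)]

lemma at'_dbar_of_gt_sub (hk : k ≤ d) (h₁ : 2 * d - k < i) (h₂ : i < 2 * d + 1) :
    at' (dbar d k) i = U := by
  rw [dbar_eq, at'_rep_append_of_le (by omega), at'_rep_append_of_le (by omega),
    at'_cons_of_pos (by omega), at'_rep_append_of_lt (by omega)]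

lemma at'_dbar_of_le (hk : k ≤ d) (h : 2 * d + 1 ≤ i) : at' (dbar d k) i = A := by
  rw [dbar_eq, at'_rep_append_of_le (by omega), at'_rep_append_of_le (by omega),
    at'_cons_of_pos (by omega), at'_rep_append_of_le (by omega), at'_rep_A]

lemma length_concat (hk : k ≤ d) : (dseq d k ++ [G] ++ dbar d k).length = 6 * d + 3 := by
  simp [length_dseq hk, length_dbar hk]; omega

lemma at'_concat_of_lt (hk : k ≤ d) (h : i < 3 * d + 1) :
    at' (dseq d k ++ [G] ++ dbar d k) i = at' (dseq d k) i := by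
  rw [List.append_assoc, at'_append_of_lt (by rw [length_dseq hk]; exact h)]

lemma at'_concat_of_le (hk : k ≤ d) (h : 3 * d + 2 ≤ i) :
    at' (dseq d k ++ [G] ++ dbar d k) i = at' (dbar d k) (i - (3 * d + 2)) := by
  rw [at'_append_of_le (by simp [length_dseq hk]; omega)]
  simp [length_dseq hk]

end Sequences

section Structures

variable {S : List Base} {P Q : Finset (ℕ × ℕ)}

lemma eq_A_or_eq_A_of_isWC {x y : Base} (hx : x ≠ C) (hy : y ≠ C) (h : isWC x y) :
    x = A ∨ y = A := by
  rcases h with h | h | h | h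
  · exact .inl h.1
  · exact .inr h.2
  · exact absurd h.1 hx
  · exact absurd h.2 hy

lemma validSS_union (hP : ValidSS S P) (hQ : ValidSS S Q)
    (hPQ : ∀ p ∈ P, ∀ q ∈ Q, p.1 ≠ q.1 ∧ p.1 ≠ q.2 ∧ p.2 ≠ q.1 ∧ p.2 ≠ q.2) :
    ValidSS S (P ∪ Q) := by
  refine ⟨fun p hp => (mem_union.mp hp).elim (hP.1 p) (hQ.1 p), fun p hp q hq hpq => ?_⟩
  rcases mem_union.mp hp with hp | hp <;> rcases mem_union.mp hq with hq | hq
  · exact hP.2 p hp q hq hpq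
  · exact hPQ p hp q hq
  · obtain ⟨h₁, h₂, h₃, h₄⟩ := hPQ q hq p hp
    exact ⟨h₁.symm, h₃.symm, h₂.symm, h₄.symm⟩
  · exact hQ.2 p hp q hq hpq

lemma card_le_count_A (hC : C ∉ S) (hP : ValidSS S P) : #P ≤ S.count A := by
  rw [← List.card_filter_getD_eq_count S A A]
  have hne {i : ℕ} (hi : i < S.length) : at' S i ≠ C := fun h => hC (h ▸ at'_mem hi)
  refine card_le_card_of_injOn (fun p => if at' S p.1 = A then p.1 else p.2) (fun p hp => ?_)
    (fun p hp q hq hpq => ?_)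
  · obtain ⟨hgap, hlen, hwc⟩ := hP.1 p hp
    have hA := eq_A_or_eq_A_of_isWC (hne (by omega)) (hne hlen) hwc
    simp only [coe_filter, mem_range]
    split_ifs with h
    · exact ⟨by omega, h⟩
    · exact ⟨hlen, hA.resolve_left h⟩
  · by_contra hne
    obtain ⟨h₁₁, h₁₂, h₂₁, h₂₂⟩ := hP.2 p hp q hq hne
    simp only at hpq
    split_ifs at hpq <;> contradiction

lemma numSP_le_card_sub_one (P : Finset (ℕ × ℕ)) : numSP P ≤ #P - 1 := by
  rcases P.eq_empty_or_nonempty with rfl | hP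
  · simp [numSP]
  obtain ⟨p₀, hp₀, hmin⟩ := exists_min_image P Prod.fst hP
  rw [← card_erase_of_mem hp₀]
  refine card_le_card_of_injOn (fun p => (p.1 + 1, p.2 - 1)) (fun p hp => ?_)
    (fun p hp q hq hpq => ?_)
  · rw [coe_filter] at hp
    refine mem_erase.mpr ⟨fun h => ?_, hp.2.1⟩
    have := hmin p hp.1
    rw [← h] at this
    simp only at this
    omega
  · simp only [coe_filter, Set.mem_ofPred_eq, Prod.mk.injEq] at hp hq hpq
    exact Prod.ext (by omega) (by omega)

lemma numSP_union_of_gap (h : ∀ p ∈ P, ∀ q ∈ Q, p.1 + 1 < q.1) :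
    numSP (P ∪ Q) = numSP P + numSP Q := by
  have hP : {p ∈ P | (p.1 + 1, p.2 - 1) ∈ P ∪ Q ∧ p.1 + 4 ≤ p.2} =
      {p ∈ P | (p.1 + 1, p.2 - 1) ∈ P ∧ p.1 + 4 ≤ p.2} :=
    filter_congr fun p hp => by
      have : (p.1 + 1, p.2 - 1) ∉ Q := fun hq => by simpa using h p hp _ hq
      simp [this]
  have hQ : {q ∈ Q | (q.1 + 1, q.2 - 1) ∈ P ∪ Q ∧ q.1 + 4 ≤ q.2} =
      {q ∈ Q | (q.1 + 1, q.2 - 1) ∈ Q ∧ q.1 + 4 ≤ q.2} :=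
    filter_congr fun q hq => by
      have : (q.1 + 1, q.2 - 1) ∉ P := fun hp => by have := h _ hp q hq; simp only at this; omega
      simp [this]
  have hdisj : Disjoint P Q := disjoint_left.mpr fun p hp hq => by simpa using h p hp p hq
  rw [numSP, filter_union, hP, hQ, card_union_of_disjoint (disjoint_filter_filter hdisj)]
  rfl

end Structures

section Helix

def helix (i j n : ℕ) : Finset (ℕ × ℕ) := (range n).image fun t => (i + t, j - t)

variable {i j n : ℕ}

lemma mem_helix {p : ℕ × ℕ} : p ∈ helix i j n ↔ ∃ t < n, (i + t, j - t) = p := by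
  simp [helix]

lemma card_helix : #(helix i j n) = n := by
  rw [helix, card_image_of_injective _ fun s t h => by simpa using congrArg Prod.fst h, card_range]

lemma validSS_helix {S : List Base} (hij : i + 2 * n ≤ j) (hj : j < S.length)
    (hwc : ∀ t < n, isWC (at' S (i + t)) (at' S (j - t))) : ValidSS S (helix i j n) := by
  constructor
  · rintro _ hp
    obtain ⟨t, ht, rfl⟩ := mem_helix.mp hp
    exact ⟨by dsimp only; omega, by dsimp only; omega, hwc t ht⟩
  · rintro _ hp _ hq hpq
    obtain ⟨t, ht, rfl⟩ := mem_helix.mp hp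
    obtain ⟨s, hs, rfl⟩ := mem_helix.mp hq
    have : t ≠ s := fun h => hpq (h ▸ rfl)
    dsimp only
    omega

lemma numSP_helix (hij : i + 2 * n ≤ j) : numSP (helix i j n) = n - 1 := by
  suffices {p ∈ helix i j n | (p.1 + 1, p.2 - 1) ∈ helix i j n ∧ p.1 + 4 ≤ p.2} =
      helix i j (n - 1) by rw [numSP, this, card_helix]
  ext p
  simp only [mem_filter, mem_helix]
  constructor
  · rintro ⟨⟨t, ht, rfl⟩, ⟨s, hs, hst⟩, -⟩
    simp only [Prod.mk.injEq] at hst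
    exact ⟨t, by omega, rfl⟩
  · rintro ⟨t, ht, rfl⟩
    exact ⟨⟨t, by omega, rfl⟩, ⟨t + 1, by omega, by ext <;> dsimp only <;> omega⟩,
      by dsimp only; omega⟩

end Helix

section Delta

variable {d k : ℕ}

lemma validSS_dseq_helix (hk : k ≤ d) : ValidSS (dseq d k) (helix k (3 * d) d) := by
  refine validSS_helix (by omega) (by rw [length_dseq hk]; omega) fun t ht => ?_
  by_cases h : t < d - k
  · rw [at'_dseq_of_lt (by omega), at'_dseq_of_le (by omega)]
    exact .inr (.inl ⟨rfl, rfl⟩)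
  · rw [at'_dseq_of_lt_add (by omega) (by omega), at'_dseq_of_gt_add (by omega) (by omega)]
    exact .inl ⟨rfl, rfl⟩

lemma numSP_le_of_validSS_dseq (hk : k ≤ d) {P : Finset (ℕ × ℕ)} (hP : ValidSS (dseq d k) P) :
    numSP P ≤ d - 1 :=
  calc numSP P ≤ #P - 1 := numSP_le_card_sub_one P
    _ ≤ (dseq d k).count A - 1 := Nat.sub_le_sub_right (card_le_count_A (C_not_mem_dseq d k) hP) 1
    _ = d - 1 := by rw [count_A_dseq hk]

lemma validSS_concat_outer_helix (hk : k ≤ d) :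
    ValidSS (dseq d k ++ [G] ++ dbar d k) (helix 0 (6 * d + 2) (d + k)) := by
  refine validSS_helix (by omega) (by rw [length_concat hk]; omega) fun t ht => ?_
  rw [at'_concat_of_lt hk (by omega), at'_concat_of_le hk (by omega), zero_add]
  by_cases h : t < d
  · rw [at'_dseq_of_lt h, at'_dbar_of_le hk (by omega)]
    exact .inr (.inl ⟨rfl, rfl⟩)
  · rw [at'_dseq_of_lt_add (by omega) (by omega), at'_dbar_of_gt_sub hk (by omega) (by omega)]
    exact .inl ⟨rfl, rfl⟩

lemma validSS_concat_inner_helix (hk : k ≤ d) :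
    ValidSS (dseq d k ++ [G] ++ dbar d k) (helix (d + k + 1) (5 * d + 1 - k) (2 * d - k)) := by
  refine validSS_helix (by omega) (by rw [length_concat hk]; omega) fun t ht => ?_
  rw [at'_concat_of_lt hk (by omega), at'_concat_of_le hk (by omega)]
  by_cases h : t < d
  · rw [at'_dseq_of_gt_add (by omega) (by omega), at'_dbar_of_lt_sub (by omega) (by omega)]
    exact .inr (.inl ⟨rfl, rfl⟩)
  · rw [at'_dseq_of_le (by omega), at'_dbar_of_lt (by omega)]
    exact .inl ⟨rfl, rfl⟩

end Delta

theorem delta_stacking_counts_general (d k : ℕ) (hk : k < d) :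
    IsGreatest {N : ℕ | ∃ P : Finset (ℕ × ℕ), ValidSS (dseq d k) P ∧ numSP P = N}
      (d - 1) ∧
    (∃ P : Finset (ℕ × ℕ), ValidSS (dseq d k ++ [G] ++ dbar d k) P ∧
      numSP P = 3 * d - 2) := by
  have outer_inner {p q : ℕ × ℕ} (hp : p ∈ helix 0 (6 * d + 2) (d + k))
      (hq : q ∈ helix (d + k + 1) (5 * d + 1 - k) (2 * d - k)) :
      p.1 + 1 < q.1 ∧ p.1 ≠ q.2 ∧ p.2 ≠ q.1 ∧ p.2 ≠ q.2 := by
    obtain ⟨t, ht, rfl⟩ := mem_helix.mp hp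
    obtain ⟨s, hs, rfl⟩ := mem_helix.mp hq
    dsimp only
    omega
  refine ⟨⟨⟨helix k (3 * d) d, validSS_dseq_helix hk.le, numSP_helix (by omega)⟩, ?_⟩,
    ⟨_, validSS_union (validSS_concat_outer_helix hk.le) (validSS_concat_inner_helix hk.le)
      fun p hp q hq => ?_, ?_⟩⟩
  · rintro N ⟨P, hP, rfl⟩
    exact numSP_le_of_validSS_dseq hk.le hP
  · obtain ⟨h₁, h₂⟩ := outer_inner hp hq
    exact ⟨by omega, h₂⟩
  · rw [numSP_union_of_gap fun p hp q hq => (outer_inner hp hq).1, numSP_helix (by omega),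
      numSP_helix (by omega)]
    omega

/-- Within `δ(k)` alone, the maximum number of stacking pairs is `d-1`; and `δ(k)`
together with its conjugate `δ̄(k)` (placed disjointly, here separated by a `G`) can
form `3d-2` stacking pairs. -/
theorem delta_stacking_counts (d k : ℕ) (h0 : 0 < k) (hk : k < d) :
    IsGreatest {N : ℕ | ∃ P : Finset (ℕ × ℕ), ValidSS (dseq d k) P ∧ numSP P = N}
      (d - 1) ∧
    (∃ P : Finset (ℕ × ℕ), ValidSS (dseq d k ++ [G] ++ dbar d k) P ∧
      numSP P = 3 * d - 2) :=
  delta_stacking_counts_general d k hk
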